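/- Let E be a finite set of edges, let c : E → ℝ with c(e) ≥ 1 for all e, let w* : E → ℝ≥0 be weights with Σ_{e ∈ C} w*(e) ≥ 1 for a subset C ⊆ E. Then Σ_{e ∈ C} c(e) · w*(e) · log₂(1 + 1/c(e)) ≥ 1. -/
import Mathlib

lemma key_log_bound (x : ℝ) (hx : 1 ≤ x) : 1 ≤ x * Real.logb 2 (1 + 1 / x) := by
  have hx0 : 0 < x := lt_of_lt_of_le one_pos hx
  set t : ℝ := 1 / x with ht
  have ht0 : 0 < t := by positivity
  have ht1 : t ≤ 1 := by
    rw [ht, div_le_one hx0]; exact hx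
  -- concavity of log: log (1 + t) ≥ t * log 2
  have hconc : t * Real.log 2 ≤ Real.log (1 + t) := by
    have h : (1 - t) • Real.log 1 + t • Real.log 2 ≤
        Real.log ((1 - t) • (1 : ℝ) + t • (2 : ℝ)) :=
      strictConcaveOn_log_Ioi.concaveOn.2
        (Set.mem_Ioi.mpr one_pos) (Set.mem_Ioi.mpr (two_pos (α := ℝ)))
        (by linarith) (le_of_lt ht0) (by ring)
    simp only [smul_eq_mul, Real.log_one, mul_zero, zero_add, add_zero] at h
    have heq : (1 - t) * 1 + t * 2 = 1 + t := by ring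
    rw [heq] at h
    linarith
  have hlog2 : 0 < Real.log 2 := Real.log_pos (by norm_num)
  have hlogb : t ≤ Real.logb 2 (1 + t) := by
    rw [Real.logb, le_div_iff₀ hlog2]
    linarith [hconc]
  calc 1 = x * t := by rw [ht]; field_simp
    _ ≤ x * Real.logb 2 (1 + t) := by
        exact mul_le_mul_of_nonneg_left hlogb (le_of_lt hx0)

theorem stmt_1 {ι : Type*} (E C : Finset ι) (hCE : C ⊆ E)
    (c wstar : ι → ℝ)
    (hc : ∀ e ∈ E, 1 ≤ c e)
    (hw : ∀ e ∈ E, 0 ≤ wstar e)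
    (hsum : 1 ≤ ∑ e ∈ C, wstar e) :
    1 ≤ ∑ e ∈ C, c e * wstar e * Real.logb 2 (1 + 1 / c e) := by
  have h : ∀ e ∈ C, wstar e ≤ c e * wstar e * Real.logb 2 (1 + 1 / c e) := by
    intro e he
    have hce := hc e (hCE he)
    have hwe := hw e (hCE he)
    have := key_log_bound (c e) hce
    calc wstar e = 1 * wstar e := (one_mul _).symm
      _ ≤ (c e * Real.logb 2 (1 + 1 / c e)) * wstar e :=
          mul_le_mul_of_nonneg_right this hwe
      _ = c e * wstar e * Real.logb 2 (1 + 1 / c e) := by ring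
  calc 1 ≤ ∑ e ∈ C, wstar e := hsum
    _ ≤ _ := Finset.sum_le_sum h
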